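/- Let G be a symmetric entrywise nonnegative N×N real matrix with combinatorial Laplacian L = D - G, and let w ∈ ℂ^N. Define p ∈ ℝ^N by p_i = |w_i|². Then pᵀ L p ≤ 4 ‖w‖₂² · (w^H L w). -/

import Mathlib

/-! Both energies are edge sums: `2 pᵀ L p = ∑ G i j (|w i|² - |w j|²)²` and
`2 Re (wᴴ L w) = ∑ G i j |w i - w j|²`. On each edge, `|a|² - |b|² = ⟪a + b, a - b⟫`, so
Cauchy–Schwarz and the parallelogram law give
`(|a|² - |b|²)² ≤ 2 (|a|² + |b|²) |a - b|² ≤ 4 ‖w‖² |a - b|²`. -/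

open Matrix ComplexOrder Filter

noncomputable def enorm {N : ℕ} (v : Fin N → ℝ) : ℝ := Real.sqrt (∑ i, v i ^ 2)

noncomputable def specNorm {N : ℕ} (G : Matrix (Fin N) (Fin N) ℝ) : ℝ :=
  ‖Matrix.toEuclideanCLM (𝕜 := ℝ) G‖

noncomputable def lamMax {N : ℕ} (A : Matrix (Fin N) (Fin N) ℝ) : ℝ :=
  sSup {t : ℝ | Module.End.HasEigenvalue (Matrix.toLin' A) t}

noncomputable def lamMaxC {N : ℕ} (A : Matrix (Fin N) (Fin N) ℂ) : ℝ :=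
  sSup {t : ℝ | Module.End.HasEigenvalue (Matrix.toLin' A) (t : ℂ)}

theorem real_inner_add_sub_eq_norm_sq_sub_norm_sq {F : Type*} [SeminormedAddCommGroup F]
    [InnerProductSpace ℝ F] (x y : F) : inner ℝ (x + y) (x - y) = ‖x‖ ^ 2 - ‖y‖ ^ 2 := by
  rw [inner_add_left, inner_sub_right, inner_sub_right, real_inner_comm y x,
    real_inner_self_eq_norm_sq, real_inner_self_eq_norm_sq]
  ring

theorem sq_norm_sq_sub_norm_sq_le {F : Type*} [SeminormedAddCommGroup F]
    [InnerProductSpace ℝ F] (x y : F) :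
    (‖x‖ ^ 2 - ‖y‖ ^ 2) ^ 2 ≤ 2 * (‖x‖ ^ 2 + ‖y‖ ^ 2) * ‖x - y‖ ^ 2 :=
  calc (‖x‖ ^ 2 - ‖y‖ ^ 2) ^ 2 = inner ℝ (x + y) (x - y) ^ 2 := by
        rw [real_inner_add_sub_eq_norm_sq_sub_norm_sq]
    _ ≤ ‖x + y‖ ^ 2 * ‖x - y‖ ^ 2 := by
        rw [← mul_pow, ← sq_abs]
        gcongr
        exact abs_real_inner_le_norm _ _
    _ ≤ 2 * (‖x‖ ^ 2 + ‖y‖ ^ 2) * ‖x - y‖ ^ 2 := by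
        gcongr
        linarith [parallelogram_law_with_norm ℝ x y, sq_nonneg ‖x - y‖]

namespace Matrix

variable {n R : Type*} [Fintype n] [DecidableEq n]

theorem two_mul_star_dotProduct_laplacian_mulVec [CommRing R] [StarRing R]
    {G : Matrix n n R} (hG : G.IsSymm) (x : n → R) :
    2 * (star x ⬝ᵥ (diagonal (fun i => ∑ j, G i j) - G) *ᵥ x) =
      ∑ i, ∑ j, G i j * (star (x i - x j) * (x i - x j)) := by
  have swap (f : n → n → R) : ∑ i, ∑ j, G i j * f j i = ∑ i, ∑ j, G i j * f i j := by
    rw [Finset.sum_comm]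
    simp_rw [hG.apply]
  have expand (i j : n) : G i j * (star (x i - x j) * (x i - x j)) =
      G i j * (star (x i) * x i) + G i j * (star (x j) * x j)
        - G i j * (star (x i) * x j) - G i j * (star (x j) * x i) := by
    rw [star_sub]; ring
  have degree_part : star x ⬝ᵥ diagonal (fun i => ∑ j, G i j) *ᵥ x =
      ∑ i, ∑ j, G i j * (star (x i) * x i) := by
    simp only [mulVec_diagonal, dotProduct, Pi.star_apply, Finset.sum_mul, Finset.mul_sum]
    exact Finset.sum_congr rfl fun i _ => Finset.sum_congr rfl fun j _ => by ring
  have adjacency_part : star x ⬝ᵥ G *ᵥ x = ∑ i, ∑ j, G i j * (star (x i) * x j) := by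
    simp only [mulVec, dotProduct, Pi.star_apply, Finset.mul_sum, mul_left_comm]
  simp only [expand, Finset.sum_sub_distrib, Finset.sum_add_distrib,
    swap fun i j => star (x i) * x i, swap fun i j => star (x i) * x j]
  rw [sub_mulVec, dotProduct_sub, degree_part, adjacency_part]
  ring

theorem two_mul_re_star_dotProduct_laplacian_map_ofReal_mulVec {G : Matrix n n ℝ}
    (hG : G.IsSymm) (w : n → ℂ) :
    2 * (star w ⬝ᵥ ((diagonal (fun i => ∑ j, G i j) - G).map Complex.ofReal) *ᵥ w).re =
      ∑ i, ∑ j, G i j * ‖w i - w j‖ ^ 2 := by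
  have hmap : (diagonal (fun i => ∑ j, G i j) - G).map Complex.ofReal =
      diagonal (fun i => ∑ j, G.map Complex.ofReal i j) - G.map Complex.ofReal := by
    rw [Matrix.map_sub _ Complex.ofReal_sub, diagonal_map Complex.ofReal_zero]
    simp only [Complex.ofReal_sum, map_apply]
  have two_mul_re (z : ℂ) : 2 * z.re = (2 * z).re := by simp
  rw [hmap, two_mul_re, two_mul_star_dotProduct_laplacian_mulVec (hG.map _),
    Complex.re_sum]
  refine Finset.sum_congr rfl fun i _ => ?_
  rw [Complex.re_sum]
  refine Finset.sum_congr rfl fun j _ => ?_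
  rw [map_apply, RCLike.star_def, Complex.conj_mul', ← Complex.ofReal_pow, ← Complex.ofReal_mul,
    Complex.ofReal_re]

end Matrix

/-- Laplacian energy of the squared-modulus profile: `pᵀ L p ≤ 4 ‖w‖₂² (wᴴ L w)`. -/
theorem laplacian_energy_modulus_sq {N : ℕ} (G : Matrix (Fin N) (Fin N) ℝ)
    (hsym : G.IsSymm) (hnn : ∀ i j, 0 ≤ G i j) (w : Fin N → ℂ) :
    (fun i => ‖w i‖ ^ 2) ⬝ᵥ
        (Matrix.diagonal (fun i => ∑ j, G i j) - G).mulVec (fun i => ‖w i‖ ^ 2) ≤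
      4 * (∑ i, ‖w i‖ ^ 2) *
        (star w ⬝ᵥ ((Matrix.diagonal (fun i => ∑ j, G i j) - G).map Complex.ofReal).mulVec w).re := by
  set p : Fin N → ℝ := fun i => ‖w i‖ ^ 2
  set S := ∑ i, ‖w i‖ ^ 2
  have hp_le (i : Fin N) : p i ≤ S :=
    Finset.single_le_sum (f := p) (fun j _ => by positivity) (Finset.mem_univ i)
  have hp := two_mul_star_dotProduct_laplacian_mulVec hsym p
  simp only [star_trivial, ← sq] at hp
  have hw := two_mul_re_star_dotProduct_laplacian_map_ofReal_mulVec hsym w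
  have edge (i j : Fin N) :
      G i j * (p i - p j) ^ 2 ≤ 4 * S * (G i j * ‖w i - w j‖ ^ 2) :=
    calc G i j * (p i - p j) ^ 2 ≤ G i j * (2 * (p i + p j) * ‖w i - w j‖ ^ 2) :=
          mul_le_mul_of_nonneg_left (sq_norm_sq_sub_norm_sq_le (w i) (w j)) (hnn i j)
      _ ≤ G i j * (4 * S * ‖w i - w j‖ ^ 2) := by
          have : 2 * (p i + p j) ≤ 4 * S := by linarith [hp_le i, hp_le j]
          gcongr
          exact hnn i j
      _ = 4 * S * (G i j * ‖w i - w j‖ ^ 2) := by ring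
  have hsum := Finset.sum_le_sum fun i (_ : i ∈ Finset.univ) =>
    Finset.sum_le_sum fun j (_ : j ∈ Finset.univ) => edge i j
  simp only [← Finset.mul_sum] at hsum
  rw [← hw, ← hp] at hsum
  linarith
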